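/- Let X be a metric space, and for each k ∈ ℤ let K_k ⊆ X be a nonempty compact set and h_k : X → X a continuous map with h_k(K_k) ⊆ K_{k+1}. Then there exists a bi-infinite sequence {z_k : k ∈ ℤ} with z_k ∈ K_k and z_{k+1} = h_k(z_k) for all k ∈ ℤ. -/

import Mathlib

/-! The sequences through the sets `K k` that follow the maps `h k` from time `n` on form a
family of nonempty compact subsets of `∏ k, K k`, decreasing as `n → -∞`. By Cantor's
intersection theorem they have a common point, and that point is a bi-infinite orbit. -/

open Set

section Orbits

variable {X : Type*} {K : ℤ → Set X} {h : ℤ → X → X}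

/-- The orbit of `x` under `h n, h (n + 1), …`, indexed by the time elapsed since `n`. -/
def forwardOrbit (h : ℤ → X → X) (n : ℤ) (x : X) : ℕ → X
  | 0 => x
  | m + 1 => h (n + m) (forwardOrbit h n x m)

theorem forwardOrbit_mem (hmaps : ∀ k, MapsTo (h k) (K k) (K (k + 1))) {n : ℤ} {x : X}
    (hx : x ∈ K n) : ∀ m : ℕ, forwardOrbit h n x m ∈ K (n + m)
  | 0 => by simpa [forwardOrbit] using hx
  | m + 1 => by
    rw [Nat.cast_succ, ← add_assoc]
    exact hmaps _ (forwardOrbit_mem hmaps hx m)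

def orbitsFrom (K : ℤ → Set X) (h : ℤ → X → X) (n : ℤ) : Set (ℤ → X) :=
  univ.pi K ∩ {z | ∀ k, n ≤ k → z (k + 1) = h k (z k)}

theorem orbitsFrom_mono : Monotone (orbitsFrom K h) :=
  fun _ _ hmn _ hz => ⟨hz.1, fun k hk => hz.2 k (hmn.trans hk)⟩

theorem orbitsFrom_nonempty (hKne : ∀ k, (K k).Nonempty)
    (hmaps : ∀ k, MapsTo (h k) (K k) (K (k + 1))) (n : ℤ) : (orbitsFrom K h n).Nonempty := by
  obtain ⟨x, hx⟩ := hKne n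
  let z : ℤ → X := fun k =>
    if n ≤ k then forwardOrbit h n x (k - n).toNat else (hKne k).some
  refine ⟨z, fun k _ => ?_, fun k hk => ?_⟩
  · by_cases hk : n ≤ k
    · have hcast : n + ((k - n).toNat : ℤ) = k := by omega
      simpa only [z, if_pos hk, hcast] using forwardOrbit_mem hmaps hx (k - n).toNat
    · simpa only [z, if_neg hk] using (hKne k).some_mem
  · have htime : (k + 1 - n).toNat = (k - n).toNat + 1 := by omega
    have hcast : n + ((k - n).toNat : ℤ) = k := by omega
    simp only [z, if_pos hk, if_pos (hk.trans (Int.le_add_one le_rfl)), htime, forwardOrbit,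
      hcast]

section Topology

variable [TopologicalSpace X] [T2Space X]

theorem isClosed_orbitsFrom (hK : ∀ k, IsClosed (K k)) (hcont : ∀ k, Continuous (h k))
    (n : ℤ) : IsClosed (orbitsFrom K h n) := by
  refine (isClosed_set_pi fun k _ => hK k).inter ?_
  simp only [ofPred_forall]
  exact isClosed_iInter fun k => isClosed_iInter fun _ =>
    isClosed_eq (continuous_apply _) ((hcont k).comp (continuous_apply k))

theorem isCompact_orbitsFrom (hK : ∀ k, IsCompact (K k)) (hcont : ∀ k, Continuous (h k))
    (n : ℤ) : IsCompact (orbitsFrom K h n) :=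
  (isCompact_univ_pi hK).of_isClosed_subset
    (isClosed_orbitsFrom (fun k => (hK k).isClosed) hcont n) inter_subset_left

end Topology

end Orbits

/-- a bi-infinite orbit of a ℤ-indexed family of continuous maps passing
through prescribed nonempty compact sets exists. -/
theorem exists_biinfinite_orbit_through_compacts {X : Type*} [MetricSpace X]
    (K : ℤ → Set X) (h : ℤ → X → X)
    (hKne : ∀ k : ℤ, (K k).Nonempty) (hKcomp : ∀ k : ℤ, IsCompact (K k))
    (hcont : ∀ k : ℤ, Continuous (h k))
    (hmaps : ∀ k : ℤ, h k '' K k ⊆ K (k + 1)) :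
    ∃ z : ℤ → X, (∀ k : ℤ, z k ∈ K k) ∧ ∀ k : ℤ, z (k + 1) = h k (z k) := by
  have hmapsTo : ∀ k, MapsTo (h k) (K k) (K (k + 1)) := fun k =>
    mapsTo_iff_image_subset.2 (hmaps k)
  obtain ⟨z, hz⟩ := IsCompact.nonempty_iInter_of_directed_nonempty_isCompact_isClosed
    (orbitsFrom K h) orbitsFrom_mono.directed_ge (orbitsFrom_nonempty hKne hmapsTo)
    (isCompact_orbitsFrom hKcomp hcont) (isClosed_orbitsFrom (fun k => (hKcomp k).isClosed) hcont)
  have hz : ∀ n, z ∈ orbitsFrom K h n := mem_iInter.1 hz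
  exact ⟨z, fun k => (hz 0).1 k (mem_univ k), fun k => (hz k).2 k le_rfl⟩
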